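/- arXiv:2503.22284 — 4 statements merged into one kernel-verified Lean document; each statement's English description precedes it below -/
import Mathlib

section
/- Under the RCT setup, for each a ∈ {0,1} the influence function φ_{m,a} := (1{A=a}/π_a)·(Y − m_a) + (m_a − Ψ_a) satisfies Var[φ_{m,a}] = ((1 − π_a)/π_a)·κ_a² + σ_a², where κ_a² := E[(Y_a − m_a)²] and σ_a² := Var[Y_a]. -/
open MeasureTheory ProbabilityTheory

private lemma memLp_integrable_mul {Ω : Type*} [MeasurableSpace Ω] {P : Measure Ω}
    {f g : Ω → ℝ} (hf : MemLp f 2 P) (hg : MemLp g 2 P) :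
    Integrable (fun ω => f ω * g ω) P := by
  have h1 := (hf.add hg).integrable_sq
  have h2 := hf.integrable_sq
  have h3 := hg.integrable_sq
  have heq : (fun ω => f ω * g ω)
      = fun ω => (((f ω + g ω) ^ 2 - f ω ^ 2) - g ω ^ 2) / 2 := by
    funext ω; ring
  rw [heq]
  exact ((h1.sub h2).sub h3).div_const 2

theorem influence_function_variance
    {Ω : Type*} (𝒢 : MeasurableSpace Ω) [mΩ : MeasurableSpace Ω] (P : Measure Ω) [IsProbabilityMeasure P]
    (hG : 𝒢 ≤ mΩ)
    (Y : Fin 2 → Ω → ℝ) (hYL2 : ∀ a, MemLp (Y a) 2 P)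
    (A : Ω → Fin 2) (hA : Measurable A)
    (hindep : Indep (MeasurableSpace.comap A inferInstance)
      (𝒢 ⊔ MeasurableSpace.comap (fun ω => (Y 0 ω, Y 1 ω)) inferInstance) P)
    (π : Fin 2 → ℝ) (hπ : ∀ a, π a = (P {ω | A ω = a}).toReal)
    (hπpos : ∀ a, 0 < π a) (hπlt : ∀ a, π a < 1)
    (m : Fin 2 → Ω → ℝ) (hmG : ∀ a, Measurable[𝒢] (m a)) (hmL2 : ∀ a, MemLp (m a) 2 P)
    (hcons : ∀ a, ∫ ω, m a ω ∂P = ∫ ω, Y a ω ∂P) :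
    ∀ a : Fin 2,
      variance (fun ω =>
          ((if A ω = a then (1:ℝ) else 0) / π a) * (Y (A ω) ω - m a ω)
            + (m a ω - ∫ x, Y a x ∂P)) P
        = ((1 - π a) / π a) * (∫ ω, (Y a ω - m a ω) ^ 2 ∂P) + variance (Y a) P := by
  intro a
  letI : MeasurableSpace Ω := mΩ
  set μY : ℝ := ∫ x, Y a x ∂P with hμY
  set I : Ω → ℝ := fun ω => if A ω = a then (1:ℝ) else 0 with hIdef
  set f : Ω → ℝ := fun ω => Y a ω - m a ω with hfdef
  set g : Ω → ℝ := fun ω => m a ω - μY with hgdef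
  have hπa : π a ≠ 0 := ne_of_gt (hπpos a)
  -- membership in L2
  have hf2 : MemLp f 2 P := (hYL2 a).sub (hmL2 a)
  have hg2 : MemLp g 2 P := (hmL2 a).sub (memLp_const μY)
  -- measurability of components
  have hmMeas : Measurable[mΩ] (m a) := (hmG a).mono hG le_rfl
  have hsetA : MeasurableSet[mΩ] {ω | A ω = a} :=
    hA (measurableSet_singleton a)
  have hImeas : Measurable[mΩ] I := by
    have : I = Set.indicator {ω | A ω = a} (fun _ => (1:ℝ)) := by
      funext ω
      by_cases h : A ω = a <;> simp [hIdef, h, Set.indicator_apply, Set.mem_setOf_eq]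
    rw [this]
    exact (measurable_const.indicator hsetA)
  have hIind : I = Set.indicator {ω | A ω = a} (fun _ => (1:ℝ)) := by
    funext ω
    by_cases h : A ω = a <;> simp [hIdef, h, Set.indicator_apply, Set.mem_setOf_eq]
  have hIbd : ∀ ω, ‖I ω‖ ≤ 1 := by
    intro ω
    by_cases h : A ω = a <;> simp [hIdef, h]
  have hIint : Integrable I P := by
    rw [hIind]
    exact Integrable.indicator (μ := P) (integrable_const (μ := P) (1:ℝ)) hsetA
  have hEI : ∫ ω, I ω ∂P = π a := by
    rw [hIind, hπ a]
    have := integral_indicator_const (μ := P) (1:ℝ) hsetA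
    rw [this, smul_eq_mul, mul_one]; rfl
  -- independence of I and T := (Y a, m a)
  set T : Ω → ℝ × ℝ := fun ω => (Y a ω, m a ω) with hTdef
  have hIT : IndepFun I T P := by
    have h1 : MeasurableSpace.comap I inferInstance ≤ MeasurableSpace.comap A inferInstance := by
      have : @Measurable Ω ℝ (MeasurableSpace.comap A inferInstance) _ I := by
        have hAc : @Measurable Ω (Fin 2) (MeasurableSpace.comap A inferInstance) _ A :=
          measurable_iff_comap_le.mpr le_rfl
        exact (measurable_of_countable (fun b : Fin 2 => if b = a then (1:ℝ) else 0)).comp hAc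
      exact measurable_iff_comap_le.mp this
    have h2 : MeasurableSpace.comap T inferInstance ≤
        𝒢 ⊔ MeasurableSpace.comap (fun ω => (Y 0 ω, Y 1 ω)) inferInstance := by
      set mY := MeasurableSpace.comap (fun ω => (Y 0 ω, Y 1 ω)) inferInstance with hmY
      have hpair : @Measurable Ω (ℝ × ℝ) mY _ (fun ω => (Y 0 ω, Y 1 ω)) :=
        measurable_iff_comap_le.mpr le_rfl
      have hYa : @Measurable Ω ℝ (𝒢 ⊔ mY) _ (Y a) := by
        fin_cases a
        · exact (measurable_fst.comp hpair).mono le_sup_right le_rfl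
        · exact (measurable_snd.comp hpair).mono le_sup_right le_rfl
      have hma : @Measurable Ω ℝ (𝒢 ⊔ mY) _ (m a) := (hmG a).mono le_sup_left le_rfl
      exact measurable_iff_comap_le.mp (hYa.prodMk hma)
    exact indep_of_indep_of_le_right (indep_of_indep_of_le_left hindep h1) h2
  -- key: expectation of I times a function of T
  have hkey : ∀ F : ℝ × ℝ → ℝ, Measurable F → Integrable (fun ω => F (T ω)) P →
      ∫ ω, I ω * F (T ω) ∂P = π a * ∫ ω, F (T ω) ∂P := by
    intro F hF hFint
    have hIF : IndepFun I (fun ω => F (T ω)) P := hIT.comp measurable_id hF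
    have h := hIF.integral_mul_eq_mul_integral hIint.aestronglyMeasurable hFint.aestronglyMeasurable
    have h2 : (fun ω => I ω * F (T ω)) = (I * fun ω => F (T ω)) := rfl
    rw [show (∫ ω, I ω * F (T ω) ∂P) = integral P (I * fun ω => F (T ω)) from by rw [← h2], h, hEI]
  -- basic integrals
  have hfint : Integrable f P := hf2.integrable one_le_two
  have hgint : Integrable g P := hg2.integrable one_le_two
  have hYint : Integrable (Y a) P := (hYL2 a).integrable one_le_two
  have hmint : Integrable (m a) P := (hmL2 a).integrable one_le_two
  have hEf : ∫ ω, f ω ∂P = 0 := by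
    rw [hfdef]
    rw [integral_sub hYint hmint, hcons a]
    ring
  have hEg : ∫ ω, g ω ∂P = 0 := by
    rw [hgdef]
    rw [integral_sub hmint (integrable_const μY), hcons a, integral_const]
    simp [hμY]
  have hf2int : Integrable (fun ω => f ω ^ 2) P := hf2.integrable_sq
  have hfgint : Integrable (fun ω => f ω * g ω) P := memLp_integrable_mul (P := P) hf2 hg2
  have hg2int : Integrable (fun ω => g ω ^ 2) P := hg2.integrable_sq
  -- independence computations
  have hIf : ∫ ω, I ω * f ω ∂P = 0 := by
    have := hkey (fun p => p.1 - p.2) (measurable_fst.sub measurable_snd) (by simpa using hfint)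
    rw [show (∫ ω, I ω * f ω ∂P) = π a * ∫ ω, f ω ∂P from this, hEf, mul_zero]
  have hIf2 : ∫ ω, I ω * f ω ^ 2 ∂P = π a * ∫ ω, f ω ^ 2 ∂P := by
    have := hkey (fun p => (p.1 - p.2) ^ 2) ((measurable_fst.sub measurable_snd).pow_const 2)
      (by simpa using hf2int)
    simpa using this
  have hIfg : ∫ ω, I ω * (f ω * g ω) ∂P = π a * ∫ ω, f ω * g ω ∂P := by
    have := hkey (fun p => (p.1 - p.2) * (p.2 - μY))
      ((measurable_fst.sub measurable_snd).mul (measurable_snd.sub measurable_const))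
      (by simpa using hfgint)
    simpa using this
  -- rewrite φ
  have hφeq : (fun ω => ((if A ω = a then (1:ℝ) else 0) / π a) * (Y (A ω) ω - m a ω)
      + (m a ω - μY)) = fun ω => (I ω / π a) * f ω + g ω := by
    funext ω
    by_cases h : A ω = a
    · simp [hIdef, hfdef, hgdef, h]
    · simp [hIdef, hfdef, hgdef, h]
  set φ : Ω → ℝ := fun ω => (I ω / π a) * f ω + g ω with hφdef
  -- φ ∈ L2
  have hφ1mem : MemLp (fun ω => (I ω / π a) * f ω) 2 P := by
    refine MemLp.of_le (hf2.const_mul (1 / π a))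
      (((hImeas.div measurable_const).aestronglyMeasurable).mul hf2.aestronglyMeasurable) ?_
    filter_upwards with ω
    simp only [norm_mul, Real.norm_eq_abs, abs_div, abs_one]
    have h1 : |I ω| ≤ 1 := by simpa using hIbd ω
    have h2 : (0:ℝ) ≤ |f ω| / 1 := by positivity
    gcongr
  have hφ2 : MemLp φ 2 P := hφ1mem.add hg2
  -- integrability of products with I
  have hIfint : Integrable (fun ω => I ω * f ω) P :=
    hfint.bdd_mul hImeas.aestronglyMeasurable (ae_of_all _ hIbd)
  have hIf2int : Integrable (fun ω => I ω * f ω ^ 2) P :=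
    hf2int.bdd_mul hImeas.aestronglyMeasurable (ae_of_all _ hIbd)
  have hIfgint : Integrable (fun ω => I ω * (f ω * g ω)) P :=
    hfgint.bdd_mul hImeas.aestronglyMeasurable (ae_of_all _ hIbd)
  -- expectation of φ is zero
  have hφalt : φ = fun ω => (π a)⁻¹ * (I ω * f ω) + g ω := by
    funext ω; simp only [hφdef]; ring
  have hEφ : ∫ ω, φ ω ∂P = 0 := by
    rw [hφalt, integral_add (hIfint.const_mul _) hgint, integral_const_mul, hIf, hEg]
    ring
  have hVφ : variance φ P = ∫ ω, φ ω ^ 2 ∂P := by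
    rw [variance_eq_integral hφ2.aestronglyMeasurable.aemeasurable, hEφ]; simp only [sub_zero]
  -- expand φ²
  have hsq : ∀ ω, φ ω ^ 2 = (π a)⁻¹ ^ 2 * (I ω * f ω ^ 2)
      + (2 * (π a)⁻¹) * (I ω * (f ω * g ω)) + g ω ^ 2 := by
    intro ω
    have hII : I ω ^ 2 = I ω := by by_cases h : A ω = a <;> simp [hIdef, h]
    calc φ ω ^ 2 = (I ω ^ 2) * ((π a)⁻¹ ^ 2 * f ω ^ 2)
          + (2 * (π a)⁻¹) * (I ω * (f ω * g ω)) + g ω ^ 2 := by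
          simp only [hφdef]; field_simp; ring
      _ = (π a)⁻¹ ^ 2 * (I ω * f ω ^ 2)
          + (2 * (π a)⁻¹) * (I ω * (f ω * g ω)) + g ω ^ 2 := by rw [hII]; ring
  have hEφ2 : ∫ ω, φ ω ^ 2 ∂P = (π a)⁻¹ * (∫ ω, f ω ^ 2 ∂P)
      + 2 * (∫ ω, f ω * g ω ∂P) + ∫ ω, g ω ^ 2 ∂P := by
    have hB : Integrable (fun ω => (2 * (π a)⁻¹) * (I ω * (f ω * g ω))) P :=
      hIfgint.const_mul _
    have hA : Integrable (fun ω => (π a)⁻¹ ^ 2 * (I ω * f ω ^ 2)) P := hIf2int.const_mul _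
    have hAB : Integrable (fun ω => (π a)⁻¹ ^ 2 * (I ω * f ω ^ 2)
        + (2 * (π a)⁻¹) * (I ω * (f ω * g ω))) P := hA.add hB
    simp only [hsq]
    rw [integral_add hAB hg2int, integral_add hA hB,
      integral_const_mul, integral_const_mul, hIf2, hIfg]
    field_simp
  -- variance of Y a
  have hVY : variance (Y a) P = (∫ ω, f ω ^ 2 ∂P)
      + 2 * (∫ ω, f ω * g ω ∂P) + ∫ ω, g ω ^ 2 ∂P := by
    rw [variance_eq_integral (hYL2 a).aestronglyMeasurable.aemeasurable,
      show (fun ω => (Y a ω - ∫ x, Y a x ∂P) ^ 2) = ((Y a) - fun _ => ∫ x, Y a x ∂P : Ω → ℝ) ^ 2 from rfl]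
    have hptw : ((Y a) - fun _ => ∫ x, Y a x ∂P : Ω → ℝ) ^ 2
        = fun ω => f ω ^ 2 + 2 * (f ω * g ω) + g ω ^ 2 := by
      funext ω
      simp only [Pi.pow_apply, Pi.sub_apply, hfdef, hgdef, ← hμY]
      ring
    have hB : Integrable (fun ω => 2 * (f ω * g ω)) P := hfgint.const_mul 2
    have hAB : Integrable (fun ω => f ω ^ 2 + 2 * (f ω * g ω)) P := hf2int.add hB
    rw [hptw, integral_add hAB hg2int, integral_add hf2int hB, integral_const_mul]
  -- conclude
  have hgoalL : variance (fun ω => ((if A ω = a then (1:ℝ) else 0) / π a) * (Y (A ω) ω - m a ω)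
      + (m a ω - μY)) P = variance φ P := by rw [hφeq]
  have hgoalR : (∫ ω, (Y a ω - m a ω) ^ 2 ∂P) = ∫ ω, f ω ^ 2 ∂P := rfl
  rw [hgoalL, hgoalR, hVφ, hEφ2, hVY]
  field_simp
  ring
end

section
/- Under the RCT setup, the influence functions φ_{m,a} := (1{A=a}/π_a)·(Y − m_a) + (m_a − Ψ_a) for the two arms satisfy Cov[φ_{m,0}, φ_{m,1}] = Cov[Y₀, Y₁] − Cov[Y₀ − m₀, Y₁ − m₁]. -/
open MeasureTheory ProbabilityTheory

/-- Covariance of two real random variables. -/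
noncomputable def cov {Ω : Type*} [MeasurableSpace Ω] (P : MeasureTheory.Measure Ω)
    (X Z : Ω → ℝ) : ℝ :=
  ∫ ω, (X ω - ∫ x, X x ∂P) * (Z ω - ∫ x, Z x ∂P) ∂P

section Aux

variable {Ω : Type*} [mΩ : MeasurableSpace Ω] {P : Measure Ω} [IsProbabilityMeasure P]

lemma mul_integrable_of_memL2 {f g : Ω → ℝ} (hf : MemLp f 2 P) (hg : MemLp g 2 P) :
    Integrable (fun ω => f ω * g ω) P := by
  have h : (1 : ENNReal) / 1 = 1 / 2 + 1 / 2 := by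
    rw [ENNReal.div_add_div_same, one_div_one, one_add_one_eq_two,
      ENNReal.div_self two_ne_zero ENNReal.ofNat_ne_top]
  have h2 : MemLp (f • g) 1 P := hg.smul hf
  rw [memLp_one_iff_integrable] at h2
  exact h2

lemma indicator_mul_integral {𝒥 : MeasurableSpace Ω} {A : Ω → Fin 2}
    (hA : Measurable[mΩ] A)
    (hindep : Indep (MeasurableSpace.comap A inferInstance) 𝒥 P)
    {f : Ω → ℝ} (hfm : Measurable[𝒥] f) (hfi : Integrable f P) (a : Fin 2) :
    ∫ ω, (if A ω = a then (1:ℝ) else 0) * f ω ∂P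
      = (P {ω | A ω = a}).toReal * ∫ ω, f ω ∂P := by
  letI : MeasurableSpace Ω := mΩ
  set g : Ω → ℝ := fun ω => if A ω = a then (1:ℝ) else 0 with hgdef
  have hset : MeasurableSet[MeasurableSpace.comap A inferInstance] (A ⁻¹' {a}) :=
    ⟨{a}, MeasurableSet.singleton a, rfl⟩
  have hge : g = Set.indicator (A ⁻¹' {a}) (fun _ => (1:ℝ)) := by
    funext ω
    by_cases h : A ω = a <;> simp [hgdef, Set.indicator_apply, h]
  have hgm : Measurable[MeasurableSpace.comap A inferInstance] g := by
    rw [hge]; exact measurable_const.indicator hset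
  have hIF : IndepFun g f P := by
    rw [IndepFun_iff_Indep]
    exact indep_of_indep_of_le_right (indep_of_indep_of_le_left hindep hgm.comap_le)
      hfm.comap_le
  have hsetM : MeasurableSet[mΩ] (A ⁻¹' {a}) := hA (MeasurableSet.singleton a)
  have hgi : Integrable g P := by
    rw [hge]
    exact (integrable_const (1:ℝ)).indicator hsetM
  have hmul := hIF.integral_mul_eq_mul_integral hgi.aestronglyMeasurable hfi.aestronglyMeasurable
  have hEg : ∫ ω, g ω ∂P = (P {ω | A ω = a}).toReal := by
    rw [hge, integral_indicator_const (1:ℝ) hsetM]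
    simp [Set.preimage, Set.mem_singleton_iff, Measure.real]
  calc ∫ ω, g ω * f ω ∂P = (∫ ω, g ω ∂P) * ∫ ω, f ω ∂P := hmul
    _ = (P {ω | A ω = a}).toReal * ∫ ω, f ω ∂P := by rw [hEg]

lemma indicator_bdd_mul_integrable {A : Ω → Fin 2} (hA : Measurable[mΩ] A) (a : Fin 2)
    {f : Ω → ℝ} (hf : Integrable f P) :
    Integrable (fun ω => (if A ω = a then (1:ℝ) else 0) * f ω) P := by
  letI : MeasurableSpace Ω := mΩ
  refine hf.bdd_mul (c := 1) ?_ (Filter.Eventually.of_forall fun ω => ?_)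
  · have hsetM : MeasurableSet[mΩ] (A ⁻¹' {a}) := hA (MeasurableSet.singleton a)
    have hgeq : (fun ω => if A ω = a then (1:ℝ) else 0)
        = (A ⁻¹' {a}).indicator (fun _ => (1:ℝ)) :=
      funext fun ω => by by_cases h : A ω = a <;> simp [Set.indicator_apply, h]
    have hm : Measurable[mΩ] fun ω => (if A ω = a then (1:ℝ) else 0) := by
      rw [hgeq]; exact measurable_const.indicator hsetM
    exact hm.aestronglyMeasurable
  · by_cases h : A ω = a <;> simp [h]

lemma influence_cov_aux {𝒥 : MeasurableSpace Ω} {A : Ω → Fin 2} (hA : Measurable[mΩ] A)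
    (hindep : Indep (MeasurableSpace.comap A inferInstance) 𝒥 P)
    {Y0 Y1 m0 m1 YA : Ω → ℝ}
    (hY0 : MemLp Y0 2 P) (hY1 : MemLp Y1 2 P)
    (hm0 : MemLp m0 2 P) (hm1 : MemLp m1 2 P)
    (hY0J : Measurable[𝒥] Y0) (hY1J : Measurable[𝒥] Y1)
    (hm0J : Measurable[𝒥] m0) (hm1J : Measurable[𝒥] m1)
    {π0 π1 : ℝ} (hπ0 : π0 = (P {ω | A ω = 0}).toReal) (hπ1 : π1 = (P {ω | A ω = 1}).toReal)
    (hπ0ne : π0 ≠ 0) (hπ1ne : π1 ≠ 0)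
    (hYA0 : ∀ ω, A ω = 0 → YA ω = Y0 ω) (hYA1 : ∀ ω, A ω = 1 → YA ω = Y1 ω)
    (hc0 : ∫ ω, m0 ω ∂P = ∫ ω, Y0 ω ∂P) (hc1 : ∫ ω, m1 ω ∂P = ∫ ω, Y1 ω ∂P) :
    @cov Ω mΩ P
        (fun ω => ((if A ω = 0 then (1:ℝ) else 0) / π0) * (YA ω - m0 ω)
          + (m0 ω - ∫ x, Y0 x ∂P))
        (fun ω => ((if A ω = 1 then (1:ℝ) else 0) / π1) * (YA ω - m1 ω)
          + (m1 ω - ∫ x, Y1 x ∂P))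
      = @cov Ω mΩ P Y0 Y1
        - @cov Ω mΩ P (fun ω => Y0 ω - m0 ω) (fun ω => Y1 ω - m1 ω) := by
  letI : MeasurableSpace Ω := mΩ
  set Ψ0 : ℝ := ∫ x, Y0 x ∂P with hΨ0
  set Ψ1 : ℝ := ∫ x, Y1 x ∂P with hΨ1
  -- basic integrability
  have hY0i : Integrable Y0 P := hY0.integrable one_le_two
  have hY1i : Integrable Y1 P := hY1.integrable one_le_two
  have hm0i : Integrable m0 P := hm0.integrable one_le_two
  have hm1i : Integrable m1 P := hm1.integrable one_le_two
  have hYm0L2 : MemLp (fun ω => Y0 ω - m0 ω) 2 P := hY0.sub hm0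
  have hYm1L2 : MemLp (fun ω => Y1 ω - m1 ω) 2 P := hY1.sub hm1
  have hmc0L2 : MemLp (fun ω => m0 ω - Ψ0) 2 P := hm0.sub (memLp_const _)
  have hmc1L2 : MemLp (fun ω => m1 ω - Ψ1) 2 P := hm1.sub (memLp_const _)
  have hYc0L2 : MemLp (fun ω => Y0 ω - Ψ0) 2 P := hY0.sub (memLp_const _)
  have hYc1L2 : MemLp (fun ω => Y1 ω - Ψ1) 2 P := hY1.sub (memLp_const _)
  have hYm0i : Integrable (fun ω => Y0 ω - m0 ω) P := hY0i.sub hm0i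
  have hYm1i : Integrable (fun ω => Y1 ω - m1 ω) P := hY1i.sub hm1i
  have hmc0i : Integrable (fun ω => m0 ω - Ψ0) P := hm0i.sub (integrable_const _)
  have hmc1i : Integrable (fun ω => m1 ω - Ψ1) P := hm1i.sub (integrable_const _)
  have hYm0zero : ∫ ω, (Y0 ω - m0 ω) ∂P = 0 := by
    rw [integral_sub hY0i hm0i, hc0, sub_self]
  have hYm1zero : ∫ ω, (Y1 ω - m1 ω) ∂P = 0 := by
    rw [integral_sub hY1i hm1i, hc1, sub_self]
  have hmc0zero : ∫ ω, (m0 ω - Ψ0) ∂P = 0 := by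
    rw [integral_sub hm0i (integrable_const _), integral_const, hc0]
    simp [hΨ0]
  have hmc1zero : ∫ ω, (m1 ω - Ψ1) ∂P = 0 := by
    rw [integral_sub hm1i (integrable_const _), integral_const, hc1]
    simp [hΨ1]
  -- key independence identity
  have hkey : ∀ (a : Fin 2) (π : ℝ), π = (P {ω | A ω = a}).toReal →
      ∀ (f : Ω → ℝ), Measurable[𝒥] f → Integrable f P →
      ∫ ω, (if A ω = a then (1:ℝ) else 0) * f ω ∂P = π * ∫ ω, f ω ∂P := by
    intro a π hπeq f hfm hfi
    rw [indicator_mul_integral hA hindep hfm hfi a, hπeq]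
  -- the φ functions
  set φ0 : Ω → ℝ := fun ω =>
    ((if A ω = 0 then (1:ℝ) else 0) / π0) * (YA ω - m0 ω) + (m0 ω - Ψ0) with hφ0def
  set φ1 : Ω → ℝ := fun ω =>
    ((if A ω = 1 then (1:ℝ) else 0) / π1) * (YA ω - m1 ω) + (m1 ω - Ψ1) with hφ1def
  have hφ0eq : φ0 = fun ω =>
      π0⁻¹ * ((if A ω = 0 then (1:ℝ) else 0) * (Y0 ω - m0 ω)) + (m0 ω - Ψ0) := by
    funext ω
    by_cases h : A ω = 0
    · simp only [hφ0def, h, if_pos rfl, hYA0 ω h]; ring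
    · simp [hφ0def, h]
  have hφ1eq : φ1 = fun ω =>
      π1⁻¹ * ((if A ω = 1 then (1:ℝ) else 0) * (Y1 ω - m1 ω)) + (m1 ω - Ψ1) := by
    funext ω
    by_cases h : A ω = 1
    · simp only [hφ1def, h, if_pos rfl, hYA1 ω h]; ring
    · simp [hφ1def, h]
  -- means of φ are zero
  have hφ0mean : ∫ ω, φ0 ω ∂P = 0 := by
    rw [hφ0eq,
      integral_add ((indicator_bdd_mul_integrable hA 0 hYm0i).const_mul _)
        hmc0i,
      integral_const_mul, hkey 0 π0 hπ0 (fun ω => Y0 ω - m0 ω) (hY0J.sub hm0J) hYm0i, hYm0zero, hmc0zero]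
    ring
  have hφ1mean : ∫ ω, φ1 ω ∂P = 0 := by
    rw [hφ1eq,
      integral_add ((indicator_bdd_mul_integrable hA 1 hYm1i).const_mul _)
        hmc1i,
      integral_const_mul, hkey 1 π1 hπ1 (fun ω => Y1 ω - m1 ω) (hY1J.sub hm1J) hYm1i, hYm1zero, hmc1zero]
    ring
  -- three product pieces
  set F1 : Ω → ℝ := fun ω => (Y0 ω - m0 ω) * (m1 ω - Ψ1) with hF1
  set F2 : Ω → ℝ := fun ω => (m0 ω - Ψ0) * (Y1 ω - m1 ω) with hF2
  set F3 : Ω → ℝ := fun ω => (m0 ω - Ψ0) * (m1 ω - Ψ1) with hF3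
  have hF1i : Integrable F1 P := mul_integrable_of_memL2 hYm0L2 hmc1L2
  have hF2i : Integrable F2 P := mul_integrable_of_memL2 hmc0L2 hYm1L2
  have hF3i : Integrable F3 P := mul_integrable_of_memL2 hmc0L2 hmc1L2
  have hF1m : Measurable[𝒥] F1 := (hY0J.sub hm0J).mul (hm1J.sub measurable_const)
  have hF2m : Measurable[𝒥] F2 := (hm0J.sub measurable_const).mul (hY1J.sub hm1J)
  have hfin2 : ∀ x : Fin 2, x = 0 ∨ x = 1 := by decide
  -- pointwise product identity
  have hprod : ∀ ω, φ0 ω * φ1 ω =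
      π0⁻¹ * ((if A ω = 0 then (1:ℝ) else 0) * F1 ω)
      + π1⁻¹ * ((if A ω = 1 then (1:ℝ) else 0) * F2 ω) + F3 ω := by
    intro ω
    rcases hfin2 (A ω) with h | h
    · have h' : A ω ≠ 1 := by rw [h]; decide
      simp only [hφ0def, hφ1def, hF1, hF2, hF3]
      rw [if_pos h, if_neg h', hYA0 ω h]
      ring
    · have h' : A ω ≠ 0 := by rw [h]; decide
      simp only [hφ0def, hφ1def, hF1, hF2, hF3]
      rw [if_pos h, if_neg h', hYA1 ω h]
      ring
  -- integral of the product
  have hi1 : Integrable (fun ω => π0⁻¹ * ((if A ω = 0 then (1:ℝ) else 0) * F1 ω)) P :=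
    (indicator_bdd_mul_integrable hA 0 hF1i).const_mul _
  have hi2 : Integrable (fun ω => π1⁻¹ * ((if A ω = 1 then (1:ℝ) else 0) * F2 ω)) P :=
    (indicator_bdd_mul_integrable hA 1 hF2i).const_mul _
  have hi12 : Integrable (fun ω => π0⁻¹ * ((if A ω = 0 then (1:ℝ) else 0) * F1 ω)
      + π1⁻¹ * ((if A ω = 1 then (1:ℝ) else 0) * F2 ω)) P := hi1.add hi2
  have hprodint : ∫ ω, φ0 ω * φ1 ω ∂P = ∫ ω, F1 ω ∂P + ∫ ω, F2 ω ∂P + ∫ ω, F3 ω ∂P := by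
    rw [integral_congr_ae (Filter.EventuallyEq.of_eq (funext hprod)),
      integral_add hi12 hF3i, integral_add hi1 hi2,
      integral_const_mul, integral_const_mul,
      hkey 0 π0 hπ0 _ hF1m hF1i, hkey 1 π1 hπ1 _ hF2m hF2i,
      inv_mul_cancel_left₀ hπ0ne, inv_mul_cancel_left₀ hπ1ne]
  -- LHS covariance
  have hLHS : @cov Ω mΩ P φ0 φ1 = ∫ ω, φ0 ω * φ1 ω ∂P := by
    unfold cov
    rw [hφ0mean, hφ1mean]
    simp
  -- RHS covariances
  have hRHS1 : @cov Ω mΩ P Y0 Y1 = ∫ ω, (Y0 ω - Ψ0) * (Y1 ω - Ψ1) ∂P := by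
    unfold cov
    rw [← hΨ0, ← hΨ1]
  have hRHS2 : @cov Ω mΩ P (fun ω => Y0 ω - m0 ω) (fun ω => Y1 ω - m1 ω)
      = ∫ ω, (Y0 ω - m0 ω) * (Y1 ω - m1 ω) ∂P := by
    unfold cov
    rw [hYm0zero, hYm1zero]
    simp
  -- algebraic identity between the integrals
  have hG2i : Integrable (fun ω => (Y0 ω - m0 ω) * (Y1 ω - m1 ω)) P :=
    mul_integrable_of_memL2 hYm0L2 hYm1L2
  have hptwise : ∀ ω, F1 ω + F2 ω + F3 ω + (Y0 ω - m0 ω) * (Y1 ω - m1 ω)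
      = (Y0 ω - Ψ0) * (Y1 ω - Ψ1) := by
    intro ω
    simp only [hF1, hF2, hF3]
    ring
  have hsum : ∫ ω, F1 ω ∂P + ∫ ω, F2 ω ∂P + ∫ ω, F3 ω ∂P
      + ∫ ω, (Y0 ω - m0 ω) * (Y1 ω - m1 ω) ∂P
      = ∫ ω, (Y0 ω - Ψ0) * (Y1 ω - Ψ1) ∂P := by
    have hF12i : Integrable (fun ω => F1 ω + F2 ω) P := hF1i.add hF2i
    have hF123i : Integrable (fun ω => F1 ω + F2 ω + F3 ω) P := hF12i.add hF3i
    rw [← integral_add hF1i hF2i, ← integral_add hF12i hF3i, ← integral_add hF123i hG2i]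
    exact integral_congr_ae (Filter.EventuallyEq.of_eq (funext hptwise))
  rw [hLHS, hprodint, hRHS1, hRHS2]
  linarith [hsum]

end Aux

set_option maxHeartbeats 1000000 in
theorem influence_function_covariance
    {Ω : Type*} (𝒢 : MeasurableSpace Ω) [mΩ : MeasurableSpace Ω] (P : Measure Ω) [IsProbabilityMeasure P]
    (hG : 𝒢 ≤ mΩ)
    (Y : Fin 2 → Ω → ℝ) (hYL2 : ∀ a, MemLp (Y a) 2 P)
    (A : Ω → Fin 2) (hA : Measurable A)
    (hindep : Indep (MeasurableSpace.comap A inferInstance)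
      (𝒢 ⊔ MeasurableSpace.comap (fun ω => (Y 0 ω, Y 1 ω)) inferInstance) P)
    (π : Fin 2 → ℝ) (hπ : ∀ a, π a = (P {ω | A ω = a}).toReal)
    (hπpos : ∀ a, 0 < π a) (hπlt : ∀ a, π a < 1)
    (m : Fin 2 → Ω → ℝ) (hmG : ∀ a, Measurable[𝒢] (m a)) (hmL2 : ∀ a, MemLp (m a) 2 P)
    (hcons : ∀ a, ∫ ω, m a ω ∂P = ∫ ω, Y a ω ∂P) :
    @cov Ω mΩ P
        (fun ω => ((if A ω = 0 then (1:ℝ) else 0) / π 0) * (Y (A ω) ω - m 0 ω)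
          + (m 0 ω - ∫ x, Y 0 x ∂P))
        (fun ω => ((if A ω = 1 then (1:ℝ) else 0) / π 1) * (Y (A ω) ω - m 1 ω)
          + (m 1 ω - ∫ x, Y 1 x ∂P))
      = @cov Ω mΩ P (Y 0) (Y 1)
        - @cov Ω mΩ P (fun ω => Y 0 ω - m 0 ω) (fun ω => Y 1 ω - m 1 ω) := by
  letI : MeasurableSpace Ω := mΩ
  have hA' : Measurable[mΩ] A := hA
  have hpair0 : Measurable[MeasurableSpace.comap (fun ω => (Y 0 ω, Y 1 ω)) inferInstance]
      (fun ω => (Y 0 ω, Y 1 ω)) := Measurable.of_comap_le le_rfl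
  have hpairJ : Measurable[𝒢 ⊔ MeasurableSpace.comap (fun ω => (Y 0 ω, Y 1 ω)) inferInstance]
      (fun ω => (Y 0 ω, Y 1 ω)) := hpair0.mono le_sup_right le_rfl
  exact influence_cov_aux hA' hindep
    (hYL2 0) (hYL2 1) (hmL2 0) (hmL2 1)
    (measurable_fst.comp hpairJ) (measurable_snd.comp hpairJ)
    ((hmG 0).mono le_sup_left le_rfl) ((hmG 1).mono le_sup_left le_rfl)
    (hπ 0) (hπ 1) (hπpos 0).ne' (hπpos 1).ne'
    (fun ω h => by rw [h]) (fun ω h => by rw [h])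
    (hcons 0) (hcons 1)
end

section
/- Under the RCT setup, for any two 𝒢-measurable square-integrable functions m_a, m_a' : Ω → ℝ and a ∈ {0,1}, the corresponding influence functions satisfy the exact second-moment identity E[(φ_{m,a} − φ_{m',a})²] = ((1 − π_a)/π_a)·E[(m_a − m_a')²]. -/
open MeasureTheory ProbabilityTheory

theorem influence_function_second_moment_difference
    {Ω : Type*} (𝒢 : MeasurableSpace Ω) [mΩ : MeasurableSpace Ω] (P : Measure Ω) [IsProbabilityMeasure P]
    (hG : 𝒢 ≤ mΩ)
    (Y : Fin 2 → Ω → ℝ) (hYL2 : ∀ a, MemLp (Y a) 2 P)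
    (A : Ω → Fin 2) (hA : Measurable A)
    (hindep : Indep (MeasurableSpace.comap A inferInstance)
      (𝒢 ⊔ MeasurableSpace.comap (fun ω => (Y 0 ω, Y 1 ω)) inferInstance) P)
    (π : Fin 2 → ℝ) (hπ : ∀ a, π a = (P {ω | A ω = a}).toReal)
    (hπpos : ∀ a, 0 < π a) (hπlt : ∀ a, π a < 1)
    (m m' : Fin 2 → Ω → ℝ)
    (hmG : ∀ a, Measurable[𝒢] (m a)) (hmL2 : ∀ a, MemLp (m a) 2 P)
    (hm'G : ∀ a, Measurable[𝒢] (m' a)) (hm'L2 : ∀ a, MemLp (m' a) 2 P) :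
    ∀ a : Fin 2,
      ∫ ω, ((((if A ω = a then (1:ℝ) else 0) / π a) * (Y (A ω) ω - m a ω)
            + (m a ω - ∫ x, Y a x ∂P))
          - (((if A ω = a then (1:ℝ) else 0) / π a) * (Y (A ω) ω - m' a ω)
            + (m' a ω - ∫ x, Y a x ∂P))) ^ 2 ∂P
        = ((1 - π a) / π a) * ∫ ω, (m a ω - m' a ω) ^ 2 ∂P := by
  intro a
  have hπa : π a ≠ 0 := (hπpos a).ne'
  have hA' : Measurable[mΩ] A := hA
  set f : Ω → ℝ := fun ω => if A ω = a then (1:ℝ) else 0 with hf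
  set g : Ω → ℝ := fun ω => (m a ω - m' a ω) ^ 2 with hg
  -- measurability / integrability of g
  have hgm : Measurable[𝒢] g := ((hmG a).sub (hm'G a)).pow measurable_const
  have hgint : Integrable g P := ((hmL2 a).sub (hm'L2 a)).integrable_sq
  have hfm : Measurable[mΩ] f := by
    exact Measurable.ite (hA' (MeasurableSet.singleton a)) measurable_const measurable_const
  -- independence of f and g
  have hIndep : IndepFun f g P := by
    rw [IndepFun_iff_Indep]
    refine indep_of_indep_of_le_right (indep_of_indep_of_le_left hindep ?_) ?_
    · exact Measurable.comap_le (by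
        have h1 : Measurable[MeasurableSpace.comap A inferInstance] A :=
          Measurable.of_comap_le le_rfl
        exact Measurable.ite (h1 (MeasurableSet.singleton a)) measurable_const
          measurable_const)
    · exact le_trans (Measurable.comap_le hgm) le_sup_left
  have hfint : Integrable f P := by
    refine (integrable_const (1:ℝ)).mono' hfm.aestronglyMeasurable ?_
    filter_upwards with ω
    by_cases h : A ω = a <;> simp [f, h]
  have hfgint : Integrable (fun ω => f ω * g ω) P := by
    refine hgint.bdd_mul (c := 1) hfm.aestronglyMeasurable (Filter.Eventually.of_forall fun ω => ?_)
    by_cases h : A ω = a <;> simp [f, h]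
  -- E[f * g] = π a * E[g]
  have hEf : ∫ ω, f ω ∂P = π a := by
    have : f = Set.indicator {ω | A ω = a} (fun _ => (1:ℝ)) := by
      ext ω; by_cases h : A ω = a <;> simp [f, h, Set.indicator]
    have hs : MeasurableSet[mΩ] {ω | A ω = a} := hA' (measurableSet_singleton a)
    rw [this, hπ a,
      @integral_indicator_const Ω ℝ mΩ _ _ P _ (1:ℝ) {ω | A ω = a} hs]
    simp [measureReal_def]
  have hEfg : ∫ ω, f ω * g ω ∂P = π a * ∫ ω, g ω ∂P := by
    have h := IndepFun.integral_mul_eq_mul_integral hIndep hfint.aestronglyMeasurable hgint.aestronglyMeasurable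
    simpa [Pi.mul_apply, hEf] using h
  -- pointwise identity
  have hpt : ∀ ω,
      ((((if A ω = a then (1:ℝ) else 0) / π a) * (Y (A ω) ω - m a ω)
            + (m a ω - ∫ x, Y a x ∂P))
          - (((if A ω = a then (1:ℝ) else 0) / π a) * (Y (A ω) ω - m' a ω)
            + (m' a ω - ∫ x, Y a x ∂P))) ^ 2
        = g ω + (1 / (π a) ^ 2 - 2 / π a) * (f ω * g ω) := by
    intro ω
    simp only [f, g]
    by_cases h : A ω = a
    · simp only [h, if_true]
      field_simp
      ring
    · simp only [h, if_false]
      ring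
  calc ∫ ω, ((((if A ω = a then (1:ℝ) else 0) / π a) * (Y (A ω) ω - m a ω)
            + (m a ω - ∫ x, Y a x ∂P))
          - (((if A ω = a then (1:ℝ) else 0) / π a) * (Y (A ω) ω - m' a ω)
            + (m' a ω - ∫ x, Y a x ∂P))) ^ 2 ∂P
      = ∫ ω, (g ω + (1 / (π a) ^ 2 - 2 / π a) * (f ω * g ω)) ∂P := by
        exact integral_congr_ae (Filter.Eventually.of_forall hpt)
    _ = ∫ ω, g ω ∂P + (1 / (π a) ^ 2 - 2 / π a) * ∫ ω, f ω * g ω ∂P := by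
        rw [integral_add hgint (hfgint.const_mul _), integral_const_mul]
    _ = ((1 - π a) / π a) * ∫ ω, (m a ω - m' a ω) ^ 2 ∂P := by
        rw [hEfg]
        have : ∫ ω, g ω ∂P = ∫ ω, (m a ω - m' a ω) ^ 2 ∂P := rfl
        rw [this]
        field_simp
        ring
end

section
/- Let (Ω, ℱ, P) be a probability space, Y₀, Y₁ : Ω → ℝ square-integrable with Y₀·Y₁ integrable, and let 𝒵 ⊆ ℱ be a sub-σ-algebra. Let m_a be a version of E[Y_a | 𝒵] for a ∈ {0,1}, and assume the idiosyncratic components are conditionally uncorrelated given 𝒵, i.e. E[Y₀·Y₁ | 𝒵] = m₀·m₁ almost surely. If Var[m₁ − m₀] ≤ Var[m_a] for at least one a ∈ {0,1} (treatment-effect heterogeneity across 𝒵-strata is no more variable than the heterogeneity in expected outcomes), then Cov[Y₀, Y₁] ≥ 0. -/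
/-!
If `E[Y₀ Y₁ | 𝒵] = m₀ m₁`, then taking expectations gives `E[Y₀ Y₁] = E[m₀ m₁]`, and since
`E[Yₐ] = E[mₐ]` the covariance of the outcomes equals that of their conditional means,
`Cov[Y₀, Y₁] = Cov[m₀, m₁]`. Expanding `Var[m₁ - m₀] = Var[m₁] - 2 Cov[m₀, m₁] + Var[m₀]`,
the bound `Var[m₁ - m₀] ≤ Var[mₐ]` leaves `2 Cov[m₀, m₁] ≥ Var[m_b] ≥ 0` for the other index `b`.
-/

open MeasureTheory ProbabilityTheory

namespace ProbabilityTheory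

variable {Ω : Type*} {mΩ : MeasurableSpace Ω} {μ : Measure Ω} [IsProbabilityMeasure μ]

lemma covariance_eq_of_condExp_mul_ae_eq {m : MeasurableSpace Ω} (hm : m ≤ mΩ)
    {X Y U V : Ω → ℝ} (hX : MemLp X 2 μ) (hY : MemLp Y 2 μ)
    (hU : U =ᵐ[μ] μ[X | m]) (hV : V =ᵐ[μ] μ[Y | m])
    (hXY : μ[fun ω => X ω * Y ω | m] =ᵐ[μ] fun ω => U ω * V ω) :
    cov[X, Y; μ] = cov[U, V; μ] := by
  have hUL2 : MemLp U 2 μ := (hX.condExp one_le_two).ae_eq hU.symm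
  have hVL2 : MemLp V 2 μ := (hY.condExp one_le_two).ae_eq hV.symm
  have hEU : μ[U] = μ[X] := by rw [integral_congr_ae hU, integral_condExp hm]
  have hEV : μ[V] = μ[Y] := by rw [integral_congr_ae hV, integral_condExp hm]
  have hEUV : μ[U * V] = μ[X * Y] :=
    (integral_congr_ae hXY).symm.trans (integral_condExp hm)
  rw [covariance_eq_sub hX hY, covariance_eq_sub hUL2 hVL2, hEU, hEV, hEUV]

lemma covariance_nonneg_of_variance_sub_le {U V : Ω → ℝ} (hU : MemLp U 2 μ) (hV : MemLp V 2 μ)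
    (h : Var[fun ω => V ω - U ω; μ] ≤ Var[U; μ] ∨ Var[fun ω => V ω - U ω; μ] ≤ Var[V; μ]) :
    0 ≤ cov[U, V; μ] := by
  rw [variance_fun_sub hV hU, covariance_comm] at h
  have hU₀ := variance_nonneg U μ
  have hV₀ := variance_nonneg V μ
  rcases h with h | h <;> linarith

end ProbabilityTheory

theorem nonnegative_cross_counterfactual_covariance_general
    {Ω : Type*} [mΩ : MeasurableSpace Ω] (P : Measure Ω) [IsProbabilityMeasure P]
    (Y0 Y1 : Ω → ℝ) (hY0 : MemLp Y0 2 P) (hY1 : MemLp Y1 2 P)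
    (𝒵 : MeasurableSpace Ω) (hZ : 𝒵 ≤ mΩ)
    (m0 m1 : Ω → ℝ)
    (hm0 : m0 =ᵐ[P] P[Y0 | 𝒵]) (hm1 : m1 =ᵐ[P] P[Y1 | 𝒵])
    (huncorr : P[fun ω => Y0 ω * Y1 ω | 𝒵] =ᵐ[P] fun ω => m0 ω * m1 ω)
    (hvar : variance (fun ω => m1 ω - m0 ω) P ≤ variance m0 P ∨
            variance (fun ω => m1 ω - m0 ω) P ≤ variance m1 P) :
    0 ≤ ∫ ω, (Y0 ω - ∫ x, Y0 x ∂P) * (Y1 ω - ∫ x, Y1 x ∂P) ∂P := by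
  change 0 ≤ cov[Y0, Y1; P]
  rw [covariance_eq_of_condExp_mul_ae_eq hZ hY0 hY1 hm0 hm1 huncorr]
  exact covariance_nonneg_of_variance_sub_le ((hY0.condExp one_le_two).ae_eq hm0.symm)
    ((hY1.condExp one_le_two).ae_eq hm1.symm) hvar

theorem nonnegative_cross_counterfactual_covariance
    {Ω : Type*} [mΩ : MeasurableSpace Ω] (P : Measure Ω) [IsProbabilityMeasure P]
    (Y0 Y1 : Ω → ℝ) (hY0 : MemLp Y0 2 P) (hY1 : MemLp Y1 2 P)
    (hY01 : Integrable (fun ω => Y0 ω * Y1 ω) P)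
    (𝒵 : MeasurableSpace Ω) (hZ : 𝒵 ≤ mΩ)
    (m0 m1 : Ω → ℝ)
    (hm0 : m0 =ᵐ[P] P[Y0 | 𝒵]) (hm1 : m1 =ᵐ[P] P[Y1 | 𝒵])
    (huncorr : P[fun ω => Y0 ω * Y1 ω | 𝒵] =ᵐ[P] fun ω => m0 ω * m1 ω)
    (hvar : variance (fun ω => m1 ω - m0 ω) P ≤ variance m0 P ∨
            variance (fun ω => m1 ω - m0 ω) P ≤ variance m1 P) :
    0 ≤ ∫ ω, (Y0 ω - ∫ x, Y0 x ∂P) * (Y1 ω - ∫ x, Y1 x ∂P) ∂P :=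
  nonnegative_cross_counterfactual_covariance_general (mΩ := mΩ) P Y0 Y1 hY0 hY1 𝒵 hZ m0 m1 hm0 hm1
    huncorr hvar
end
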